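/- The fraction of continuous (i.e., face-connected) segments of length l of the level-L d-dimensional Morton curve is at least 1/(2^d − 1). Precisely: for d ≥ 1, L ≥ 0, and 1 ≤ l ≤ 2^{dL}, the number of integers a with 0 ≤ a ≤ 2^{dL} − l such that the set of level-L quadrants {Q : a ≤ Q ≤ a + l − 1} is face-connected is at least (2^{dL} − l + 1)/(2^d − 1). -/

import Mathlib

/-!
Choose `b` with `2 ^ b < l ≤ 2 ^ (b + 1)`. Inside an aligned block of `2 ^ (b + 1)` quadrants,
for every `v < 2 ^ b` with no bit on the axis of bit `b`, the quadrants `v + axisMask d b` of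
the lower half and `2 ^ b + v` of the upper half are face-neighbors: adding one to that
coordinate carries through all its lower bits. Prefixes and suffixes of aligned blocks are
connected (induction on the block size, with `v = 0` and `v = offAxisMask d b`), so a segment
crossing the midpoint of its block is connected as soon as it contains such a pair. In each
aligned block of `2 ^ (b + 2)` quadrants this yields `2 (axisMask d (b + 1) + 1)` continuous
segments, and `(2 ^ d - 1) (axisMask d (b + 1) + 1) ≥ 2 ^ (b + 1)` since `axisMask d (b + 1)`
is the geometric sum `2 ^ (b + 1 - d) + 2 ^ (b + 1 - 2d) + ⋯`. When `d = 1`, `l = 1` or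
`l > 2 ^ (dL - 1)`, every segment is continuous.
-/

/-- The `r`-th coordinate (1 ≤ r ≤ d) of a level-`L` quadrant `Q` in dimension `d`. -/
def mortonCoord (d L r Q : ℕ) : ℕ :=
  ∑ ℓ ∈ Finset.range L, (Q / 2 ^ (ℓ * d + (r - 1)) % 2) * 2 ^ ℓ

/-- Two level-`L` quadrants are face-neighbors: they differ by exactly one in exactly
one coordinate and agree in all other coordinates. -/
def MortonFaceNbr (d L Q Q' : ℕ) : Prop :=
  Q ≠ Q' ∧ ∃ r, 1 ≤ r ∧ r ≤ d ∧
    ((mortonCoord d L r Q : ℤ) - (mortonCoord d L r Q' : ℤ)).natAbs = 1 ∧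
    ∀ s, 1 ≤ s → s ≤ d → s ≠ r → mortonCoord d L s Q = mortonCoord d L s Q'

/-- A set of level-`L` quadrants is face-connected: the graph on `S` whose edges join
face-neighbors is connected. -/
def MortonFaceConnected (d L : ℕ) (S : Set ℕ) : Prop :=
  ∀ Q ∈ S, ∀ Q' ∈ S,
    Relation.ReflTransGen (fun a b => a ∈ S ∧ b ∈ S ∧ MortonFaceNbr d L a b) Q Q'

/-- `S` has at most `n` face-connected components: it can be written as a union of `n`
face-connected subsets. -/
def MortonCompBound (d L : ℕ) (S : Set ℕ) (n : ℕ) : Prop :=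
  ∃ f : Fin n → Set ℕ, S = ⋃ i, f i ∧ ∀ i, MortonFaceConnected d L (f i)

lemma MortonFaceNbr.symm {d L Q Q' : ℕ} (h : MortonFaceNbr d L Q Q') : MortonFaceNbr d L Q' Q := by
  obtain ⟨hne, r, hr1, hr2, habs, hs⟩ := h
  refine ⟨hne.symm, r, hr1, hr2, ?_, fun s h1 h2 h3 => (hs s h1 h2 h3).symm⟩
  rwa [← Int.natAbs_neg, neg_sub]

lemma MortonFaceConnected.union {d L : ℕ} {A B : Set ℕ} (hA : MortonFaceConnected d L A)
    (hB : MortonFaceConnected d L B) {a b : ℕ} (ha : a ∈ A) (hb : b ∈ B)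
    (hab : MortonFaceNbr d L a b) : MortonFaceConnected d L (A ∪ B) := by
  let R := fun x y => x ∈ A ∪ B ∧ y ∈ A ∪ B ∧ MortonFaceNbr d L x y
  have hA' : ∀ x ∈ A, ∀ y ∈ A, Relation.ReflTransGen R x y := fun x hx y hy =>
    Relation.ReflTransGen.mono (fun _ _ h => ⟨.inl h.1, .inl h.2.1, h.2.2⟩) _ _ (hA x hx y hy)
  have hB' : ∀ x ∈ B, ∀ y ∈ B, Relation.ReflTransGen R x y := fun x hx y hy =>
    Relation.ReflTransGen.mono (fun _ _ h => ⟨.inr h.1, .inr h.2.1, h.2.2⟩) _ _ (hB x hx y hy)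
  have hab' : Relation.ReflTransGen R a b := .single ⟨.inl ha, .inr hb, hab⟩
  have hba' : Relation.ReflTransGen R b a := .single ⟨.inr hb, .inl ha, hab.symm⟩
  rintro x (hx | hx) y (hy | hy)
  · exact hA' x hx y hy
  · exact ((hA' x hx a ha).trans hab').trans (hB' b hb y hy)
  · exact ((hB' x hx b hb).trans hba').trans (hA' a ha y hy)
  · exact hB' x hx y hy

lemma mortonFaceConnected_Icc_self (d L a : ℕ) : MortonFaceConnected d L (Set.Icc a a) := by
  rintro x hx y hy
  rw [Set.Icc_self, Set.mem_singleton_iff] at hx hy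
  rw [hx, hy]

lemma MortonFaceConnected.Icc_union {d L x y z a b : ℕ}
    (h₁ : MortonFaceConnected d L (Set.Icc x (z - 1))) (h₂ : MortonFaceConnected d L (Set.Icc z y))
    (hxa : x ≤ a) (haz : a < z) (hzb : z ≤ b) (hby : b ≤ y) (hab : MortonFaceNbr d L a b) :
    MortonFaceConnected d L (Set.Icc x y) := by
  have hsplit : Set.Icc x y = Set.Icc x (z - 1) ∪ Set.Icc z y := by
    ext n; simp only [Set.mem_Icc, Set.mem_union]; omega
  rw [hsplit]
  exact MortonFaceConnected.union h₁ h₂ ⟨hxa, by omega⟩ ⟨hzb, hby⟩ hab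

namespace Morton

open Finset

def digit (x p : ℕ) : ℕ := x / 2 ^ p % 2

lemma digit_le_one (x p : ℕ) : digit x p ≤ 1 :=
  Nat.le_of_lt_succ (Nat.mod_lt _ two_pos)

lemma digit_eq_zero_of_lt {x p : ℕ} (h : x < 2 ^ p) : digit x p = 0 := by
  simp [digit, Nat.div_eq_of_lt h]

lemma digit_zero_of_le_one (x : ℕ) (h : x ≤ 1) : digit x 0 = x := by
  simp only [digit, pow_zero, Nat.div_one]; omega

lemma digit_mul_two_pow_add {y : ℕ} (m c p : ℕ) (hy : y < 2 ^ c) :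
    digit (m * 2 ^ c + y) p = if p < c then digit y p else digit m (p - c) := by
  split_ifs with hp
  · obtain ⟨k, rfl⟩ := Nat.exists_eq_add_of_lt hp
    have : m * 2 ^ (p + k + 1) = m * 2 ^ k * 2 * 2 ^ p := by ring
    simp only [digit, this, Nat.add_comm _ y, Nat.add_mul_div_right _ _ (Nat.two_pow_pos p),
      Nat.add_mul_mod_self_right]
  · obtain ⟨k, rfl⟩ := Nat.exists_eq_add_of_le (not_lt.mp hp)
    rw [digit, digit, Nat.add_sub_cancel_left, pow_add, ← Nat.div_div_eq_div_mul,
      Nat.add_comm, Nat.add_mul_div_right _ _ (Nat.two_pow_pos c), Nat.div_eq_of_lt hy, zero_add]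

def ofBits (b : ℕ) (f : ℕ → ℕ) : ℕ := ∑ j ∈ range b, f j * 2 ^ j

lemma ofBits_succ (b : ℕ) (f : ℕ → ℕ) : ofBits (b + 1) f = f b * 2 ^ b + ofBits b f := by
  rw [ofBits, sum_range_succ, add_comm]; rfl

lemma ofBits_congr {b : ℕ} {f g : ℕ → ℕ} (h : ∀ j < b, f j = g j) : ofBits b f = ofBits b g :=
  sum_congr rfl fun j hj => by rw [h j (mem_range.mp hj)]

lemma ofBits_mono {b : ℕ} {f g : ℕ → ℕ} (h : ∀ j < b, f j ≤ g j) : ofBits b f ≤ ofBits b g :=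
  sum_le_sum fun j hj => Nat.mul_le_mul_right _ (h j (mem_range.mp hj))

lemma ofBits_add (b : ℕ) (f g : ℕ → ℕ) :
    ofBits b (fun j => f j + g j) = ofBits b f + ofBits b g := by
  simp only [ofBits, add_mul, sum_add_distrib]

lemma ofBits_one (b : ℕ) : ofBits b (fun _ => 1) = 2 ^ b - 1 := by
  induction b with
  | zero => rfl
  | succ b ih => rw [ofBits_succ, ih, pow_succ]; have := Nat.one_le_two_pow (n := b); omega

lemma ofBits_digit (b x : ℕ) : ofBits b (digit x) = x % 2 ^ b := by
  induction b with
  | zero => simp [ofBits, Nat.mod_one]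
  | succ b ih => rw [ofBits_succ, ih, pow_succ, Nat.mod_mul, digit]; ring

lemma ofBits_digit_of_lt {b x : ℕ} (h : x < 2 ^ b) : ofBits b (digit x) = x := by
  rw [ofBits_digit, Nat.mod_eq_of_lt h]

lemma ofBits_lt {b : ℕ} {f : ℕ → ℕ} (hf : ∀ j, f j ≤ 1) : ofBits b f < 2 ^ b :=
  calc ofBits b f ≤ ofBits b (fun _ => 1) := ofBits_mono fun j _ => hf j
    _ < 2 ^ b := by rw [ofBits_one]; exact Nat.sub_lt (Nat.two_pow_pos b) one_pos

lemma digit_ofBits {b : ℕ} {f : ℕ → ℕ} (hf : ∀ j, f j ≤ 1) (p : ℕ) :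
    digit (ofBits b f) p = if p < b then f p else 0 := by
  induction b with
  | zero => simp [ofBits, digit]
  | succ b ih =>
    rw [ofBits_succ, digit_mul_two_pow_add _ _ _ (ofBits_lt hf), ih]
    rcases lt_trichotomy p b with hp | rfl | hp
    · simp [hp, hp.trans (Nat.lt_succ_self b)]
    · simp [digit_zero_of_le_one _ (hf p)]
    · have hf' := hf b
      rw [if_neg (by omega), if_neg (by omega), digit, Nat.div_eq_of_lt]
      calc f b < 2 := by omega
        _ ≤ 2 ^ (p - b) := Nat.le_self_pow (by omega) 2

lemma ofBits_eq_add_one_of_carry {L q : ℕ} {f g : ℕ → ℕ} (hq : q < L)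
    (hlow : ∀ j < q, f j = 1 ∧ g j = 0) (hf : f q = 0) (hg : g q = 1)
    (hhigh : ∀ j, q < j → f j = g j) : ofBits L g = ofBits L f + 1 := by
  induction L, hq using Nat.le_induction with
  | base =>
    have hf' : ofBits q f = 2 ^ q - 1 :=
      (ofBits_congr fun j hj => (hlow j hj).1).trans (ofBits_one q)
    have hg' : ofBits q g = 0 :=
      (ofBits_congr fun j hj => (hlow j hj).2).trans (by simp [ofBits])
    rw [ofBits_succ, ofBits_succ, hf, hg, hf', hg']
    have := Nat.one_le_two_pow (n := q)
    omega
  | succ n hqn ih => rw [ofBits_succ, ofBits_succ, ih, hhigh n hqn]; ring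

/- Bit `p` of a quadrant is bit `p / d` of its coordinate `p % d + 1`. `axisMask d b` collects
the bits below `b` that belong to the same coordinate as bit `b`. -/

def axisMask (d b : ℕ) : ℕ := ofBits b fun j => if j % d = b % d then 1 else 0

def offAxisMask (d b : ℕ) : ℕ := ofBits b fun j => if j % d = b % d then 0 else 1

def offAxisPart (d b x : ℕ) : ℕ := ofBits b fun j => if j % d = b % d then 0 else digit x j

lemma axisMask_lt (d b : ℕ) : axisMask d b < 2 ^ b :=
  ofBits_lt fun j => by split_ifs <;> simp

lemma offAxisMask_lt (d b : ℕ) : offAxisMask d b < 2 ^ b :=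
  ofBits_lt fun j => by split_ifs <;> simp

lemma offAxisPart_lt (d b x : ℕ) : offAxisPart d b x < 2 ^ b :=
  ofBits_lt fun j => by split_ifs <;> simp [digit_le_one]

lemma digit_offAxisMask_of_mod_eq {d b p : ℕ} (hp : p % d = b % d) :
    digit (offAxisMask d b) p = 0 := by
  rw [offAxisMask, digit_ofBits (fun j => by split_ifs <;> simp)]
  simp [hp]

lemma digit_offAxisPart_of_mod_eq {d b p : ℕ} (x : ℕ) (hp : p % d = b % d) :
    digit (offAxisPart d b x) p = 0 := by
  rw [offAxisPart, digit_ofBits (fun j => by split_ifs <;> simp [digit_le_one])]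
  simp [hp]

lemma axisMask_add_offAxisMask (d b : ℕ) : axisMask d b + offAxisMask d b = 2 ^ b - 1 := by
  rw [axisMask, offAxisMask, ← ofBits_add, ← ofBits_one]
  exact ofBits_congr fun j _ => by split_ifs <;> rfl

lemma offAxisPart_le (d b x : ℕ) : offAxisPart d b x ≤ x :=
  calc offAxisPart d b x ≤ ofBits b (digit x) := ofBits_mono fun j _ => by split_ifs <;> simp
    _ ≤ x := (ofBits_digit b x).trans_le (Nat.mod_le _ _)

lemma le_offAxisPart_add_axisMask {d b x : ℕ} (hx : x < 2 ^ b) :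
    x ≤ offAxisPart d b x + axisMask d b := by
  conv_lhs => rw [← ofBits_digit_of_lt hx]
  rw [offAxisPart, axisMask, ← ofBits_add]
  exact ofBits_mono fun j _ => by split_ifs <;> simp [digit_le_one]

lemma add_axisMask_eq_ofBits {d b v : ℕ} (hvb : v < 2 ^ b) :
    v + axisMask d b = ofBits b fun j => digit v j + if j % d = b % d then 1 else 0 := by
  rw [ofBits_add, ofBits_digit_of_lt hvb, axisMask]

lemma digit_add_ite_le_one {d b v : ℕ} (hv : ∀ p, p % d = b % d → digit v p = 0) (j : ℕ) :
    digit v j + (if j % d = b % d then 1 else 0) ≤ 1 := by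
  split_ifs with h
  · simp [hv j h]
  · simpa using digit_le_one v j

lemma add_axisMask_lt {d b v : ℕ} (hv : ∀ p, p % d = b % d → digit v p = 0) (hvb : v < 2 ^ b) :
    v + axisMask d b < 2 ^ b :=
  add_axisMask_eq_ofBits hvb ▸ ofBits_lt (digit_add_ite_le_one hv)

lemma axisMask_of_lt {d b : ℕ} (hb : b < d) : axisMask d b = 0 := by
  refine Finset.sum_eq_zero fun j (hj : j ∈ range b) => ?_
  dsimp only
  rw [Nat.mod_eq_of_lt hb, Nat.mod_eq_of_lt ((mem_range.mp hj).trans hb),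
    if_neg (mem_range.mp hj).ne, zero_mul]

lemma axisMask_add_self {d : ℕ} (hd : 0 < d) (b : ℕ) :
    axisMask d (b + d) = axisMask d b + 2 ^ b := by
  rw [axisMask, ofBits, sum_range_add, Nat.add_mod_right, sum_eq_single_of_mem 0
    (mem_range.mpr hd)]
  · simp [axisMask, ofBits]
  · intro j hj hj0
    rw [if_neg, zero_mul]
    intro h
    have : j ≡ 0 [MOD d] := Nat.ModEq.add_left_cancel' b (by simpa [Nat.ModEq] using h)
    exact hj0 (by simpa [Nat.ModEq, Nat.mod_eq_of_lt (mem_range.mp hj)] using this)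

lemma two_pow_mul_axisMask_add {d : ℕ} (hd : 0 < d) (b : ℕ) :
    2 ^ d * axisMask d b + 2 ^ (b % d) = axisMask d b + 2 ^ b := by
  induction b using Nat.strong_induction_on with
  | _ b ih =>
    rcases lt_or_ge b d with hb | hb
    · rw [axisMask_of_lt hb, Nat.mod_eq_of_lt hb]; ring
    · obtain ⟨c, rfl⟩ := Nat.exists_eq_add_of_le' hb
      have := ih c (by omega)
      rw [axisMask_add_self hd, Nat.add_mod_right, pow_add]
      nlinarith

lemma two_pow_le_mul_axisMask_add_one {d : ℕ} (hd : 0 < d) (b : ℕ) :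
    2 ^ b ≤ (2 ^ d - 1) * (axisMask d b + 1) := by
  have h := two_pow_mul_axisMask_add hd b
  have : 2 ^ (b % d) < 2 ^ d := Nat.pow_lt_pow_right one_lt_two (Nat.mod_lt b hd)
  zify [Nat.one_le_two_pow] at *
  nlinarith

lemma two_mul_axisMask_lt {d : ℕ} (hd : 2 ≤ d) (b : ℕ) : 2 * axisMask d b < 2 ^ b := by
  have h := two_pow_mul_axisMask_add (d := d) (by omega) b
  have : 4 ≤ 2 ^ d := by simpa using Nat.pow_le_pow_right two_pos hd
  have := Nat.one_le_two_pow (n := b % d)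
  nlinarith

lemma mortonCoord_eq_ofBits (d L r Q : ℕ) :
    mortonCoord d L r Q = ofBits L fun ℓ => digit Q (ℓ * d + (r - 1)) := rfl

lemma mortonFaceNbr_of_digits {d L b Q Q' : ℕ} (hd : 0 < d) (hb : b < d * L)
    (hlow : ∀ p < b, p % d = b % d → digit Q p = 1 ∧ digit Q' p = 0)
    (hQ : digit Q b = 0) (hQ' : digit Q' b = 1)
    (hrest : ∀ p, b < p ∨ p % d ≠ b % d → digit Q p = digit Q' p) :
    MortonFaceNbr d L Q Q' := by
  have hres : ∀ ℓ {s}, s < d → (ℓ * d + s) % d = s := fun ℓ s hs => by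
    rw [Nat.mul_add_mod', Nat.mod_eq_of_lt hs]
  have hσ : b % d < d := Nat.mod_lt b hd
  have hbq : b / d * d + b % d = b := Nat.div_add_mod' b d
  have hqL : b / d < L := (Nat.div_lt_iff_lt_mul hd).mpr (by linarith)
  refine ⟨fun h => by simp [h, hQ'] at hQ, b % d + 1, by omega, by omega, ?_, ?_⟩
  · rw [mortonCoord_eq_ofBits, mortonCoord_eq_ofBits, Nat.add_sub_cancel,
      ofBits_eq_add_one_of_carry hqL (f := fun ℓ => digit Q (ℓ * d + b % d))
        (g := fun ℓ => digit Q' (ℓ * d + b % d))]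
    · simp
    · intro ℓ hℓ
      exact hlow _ (by nlinarith) (hres ℓ hσ)
    · simpa only [hbq] using hQ
    · simpa only [hbq] using hQ'
    · intro ℓ hℓ
      exact hrest _ (Or.inl (by nlinarith [Nat.mul_le_mul_right d hℓ]))
  · intro s hs1 hs2 hs
    refine ofBits_congr fun ℓ _ => hrest _ (Or.inr ?_)
    rw [hres ℓ (by omega)]
    omega

lemma digit_one_two_pow_add {v b : ℕ} (hv : v < 2 ^ b) (p : ℕ) :
    digit (2 ^ b + v) p = if p < b then digit v p else if p = b then 1 else 0 := by
  rw [← one_mul (2 ^ b), digit_mul_two_pow_add _ _ _ hv]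
  split_ifs with h1 h2
  · rfl
  · simp [h2, digit]
  · exact digit_eq_zero_of_lt (Nat.one_lt_two_pow (by omega))

/-- The quadrants differ only in the coordinate of bit `b`, whose bits at positions `≤ b` read
`0 1 ⋯ 1` in the first and `1 0 ⋯ 0` in the second. -/
lemma mortonFaceNbr_across_half {d L b : ℕ} (m : ℕ) {v : ℕ} (hd : 0 < d) (hb : b < d * L)
    (hv : ∀ p, p % d = b % d → digit v p = 0) (hvb : v < 2 ^ b) :
    MortonFaceNbr d L (m * 2 ^ (b + 1) + (v + axisMask d b)) (m * 2 ^ (b + 1) + 2 ^ b + v) := by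
  have hlt : v + axisMask d b < 2 ^ (b + 1) :=
    (add_axisMask_lt hv hvb).trans (Nat.pow_lt_pow_succ one_lt_two)
  have hlt' : 2 ^ b + v < 2 ^ (b + 1) := by rw [pow_succ]; omega
  have hQ : ∀ p, digit (m * 2 ^ (b + 1) + (v + axisMask d b)) p =
      if p < b then digit v p + (if p % d = b % d then 1 else 0)
      else if p = b then 0 else digit m (p - (b + 1)) := fun p => by
    rw [digit_mul_two_pow_add _ _ _ hlt, add_axisMask_eq_ofBits hvb,
      digit_ofBits (digit_add_ite_le_one hv)]
    split_ifs <;> first | rfl | omega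
  have hQ' : ∀ p, digit (m * 2 ^ (b + 1) + 2 ^ b + v) p =
      if p < b then digit v p else if p = b then 1 else digit m (p - (b + 1)) := fun p => by
    rw [add_assoc, digit_mul_two_pow_add _ _ _ hlt', digit_one_two_pow_add hvb]
    split_ifs <;> first | rfl | omega
  refine mortonFaceNbr_of_digits hd hb (fun p hp hpb => ?_) ?_ ?_ (fun p hp => ?_)
  · simp [hQ, hQ', hp, hpb, hv p hpb]
  · simp [hQ]
  · simp [hQ']
  · rw [hQ, hQ']
    rcases hp with hp | hp
    · simp [hp.ne', hp.not_gt]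
    · simp [hp, show p ≠ b by rintro rfl; exact hp rfl]

def EndSegmentsConnected (d L b : ℕ) : Prop :=
  ∀ u x y, u * 2 ^ b ≤ x → x ≤ y → y < u * 2 ^ b + 2 ^ b →
    (x = u * 2 ^ b ∨ y + 1 = u * 2 ^ b + 2 ^ b) → MortonFaceConnected d L (Set.Icc x y)

lemma EndSegmentsConnected.mortonFaceConnected_of_crossing {d L b : ℕ}
    (hends : EndSegmentsConnected d L b) (hd : 0 < d) (hb : b < d * L) (u : ℕ) {v x y : ℕ}
    (hv : ∀ p, p % d = b % d → digit v p = 0) (hvb : v < 2 ^ b) (hx : u * 2 ^ (b + 1) ≤ x)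
    (hxv : x ≤ u * 2 ^ (b + 1) + (v + axisMask d b)) (hyv : u * 2 ^ (b + 1) + 2 ^ b + v ≤ y)
    (hy : y < u * 2 ^ (b + 1) + 2 ^ (b + 1)) : MortonFaceConnected d L (Set.Icc x y) := by
  have hlt := add_axisMask_lt hv hvb
  have h2u : 2 * u * 2 ^ b = u * 2 ^ (b + 1) := by ring
  have h2u1 : (2 * u + 1) * 2 ^ b = u * 2 ^ (b + 1) + 2 ^ b := by ring
  have hpow : 2 ^ (b + 1) = 2 ^ b + 2 ^ b := by ring
  refine MortonFaceConnected.Icc_union (z := u * 2 ^ (b + 1) + 2 ^ b)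
    (hends (2 * u) _ _ (by omega) (by omega) (by omega) (Or.inr (by omega)))
    (hends (2 * u + 1) _ _ (by omega) (by omega) (by omega) (Or.inl (by omega)))
    hxv (by omega) (by omega) hyv (mortonFaceNbr_across_half u hd hb hv hvb)

lemma endSegmentsConnected {d L : ℕ} (hd : 0 < d) :
    ∀ b ≤ d * L, EndSegmentsConnected d L b := by
  intro b
  induction b with
  | zero =>
    intro _ u x y hx hxy hy _
    obtain rfl : x = y := by simp at hy; omega
    exact mortonFaceConnected_Icc_self d L x
  | succ b ih =>
    intro hb u x y hx hxy hy hend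
    have ih := ih (by omega)
    have h2u : 2 * u * 2 ^ b = u * 2 ^ (b + 1) := by ring
    have h2u1 : (2 * u + 1) * 2 ^ b = u * 2 ^ (b + 1) + 2 ^ b := by ring
    have hpow : 2 ^ (b + 1) = 2 ^ b + 2 ^ b := by ring
    rcases lt_or_ge y (u * 2 ^ (b + 1) + 2 ^ b) with hlow | hmid
    · exact ih (2 * u) x y (by omega) hxy (by omega) (Or.inl (by omega))
    rcases le_or_gt (u * 2 ^ (b + 1) + 2 ^ b) x with hhigh | hxmid
    · exact ih (2 * u + 1) x y (by omega) hxy (by omega) (Or.inr (by omega))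
    rcases hend with rfl | hend
    · exact ih.mortonFaceConnected_of_crossing hd (by omega) u (v := 0)
        (fun p _ => by simp [digit]) (Nat.two_pow_pos b) le_rfl (by omega) (by omega) hy
    · have := axisMask_add_offAxisMask d b
      have := offAxisMask_lt d b
      exact ih.mortonFaceConnected_of_crossing hd (by omega) u (v := offAxisMask d b)
        (fun p hp => digit_offAxisMask_of_mod_eq hp) (offAxisMask_lt d b) hx (by omega)
        (by omega) hy

lemma mortonFaceConnected_of_crossing {d L b : ℕ} (hd : 0 < d) (hb : b < d * L) (u : ℕ)
    {v x y : ℕ} (hv : ∀ p, p % d = b % d → digit v p = 0) (hvb : v < 2 ^ b)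
    (hx : u * 2 ^ (b + 1) ≤ x) (hxv : x ≤ u * 2 ^ (b + 1) + (v + axisMask d b))
    (hyv : u * 2 ^ (b + 1) + 2 ^ b + v ≤ y) (hy : y < u * 2 ^ (b + 1) + 2 ^ (b + 1)) :
    MortonFaceConnected d L (Set.Icc x y) :=
  (endSegmentsConnected hd b hb.le).mortonFaceConnected_of_crossing hd hb u hv hvb hx hxv hyv hy

/-- The crossing pair comes from clearing the bits of the start on the axis of bit `b`. -/
lemma mortonFaceConnected_segment_of_le_two_pow {d L b l : ℕ} (hd : 0 < d) (hb : b < d * L)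
    (hl : 2 ^ b < l) (u : ℕ) {α : ℕ} (hα : α + l ≤ 2 ^ (b + 1)) :
    MortonFaceConnected d L (Set.Icc (u * 2 ^ (b + 1) + α) (u * 2 ^ (b + 1) + α + l - 1)) := by
  have hpow : 2 ^ (b + 1) = 2 ^ b + 2 ^ b := by ring
  have hαb : α < 2 ^ b := by omega
  have := offAxisPart_le d b α
  exact mortonFaceConnected_of_crossing hd hb u (fun p hp => digit_offAxisPart_of_mod_eq α hp)
    (offAxisPart_lt d b α) (by omega) (by have := le_offAxisPart_add_axisMask (d := d) hαb; omega)
    (by omega) (by omega)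

lemma mortonFaceConnected_segment_of_le_axisMask {d L b l : ℕ} (hd : 0 < d)
    (hb : b + 1 < d * L) (hl : 2 ^ b < l) (hl' : l ≤ 2 ^ (b + 1)) (u : ℕ) {r : ℕ}
    (hr : r ≤ axisMask d (b + 1)) :
    MortonFaceConnected d L (Set.Icc (u * 2 ^ (b + 2) + r) (u * 2 ^ (b + 2) + r + l - 1)) := by
  have h2u : u * 2 ^ (b + 2) = 2 * u * 2 ^ (b + 1) := by ring
  rcases le_or_gt (r + l) (2 ^ (b + 1)) with hrl | hrl
  · rw [h2u]
    exact mortonFaceConnected_segment_of_le_two_pow (L := L) (b := b) hd (by omega) hl _ hrl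
  · have := axisMask_lt d (b + 1)
    have hpow : 2 ^ (b + 1 + 1) = 2 ^ (b + 1) + 2 ^ (b + 1) := by ring
    have hu : u * 2 ^ (b + 2) = u * 2 ^ (b + 1 + 1) := rfl
    exact mortonFaceConnected_of_crossing (b := b + 1) hd hb u (v := 0)
      (fun p _ => by simp [digit]) (Nat.two_pow_pos _) (by omega) (by omega) (by omega) (by omega)

lemma mortonFaceConnected_segment_of_offAxisMask_lt {d L b l : ℕ} (hd : 0 < d)
    (hb : b + 1 < d * L) (hl : 2 ^ b < l) (u : ℕ) {r : ℕ}
    (hr : 2 ^ (b + 1) + offAxisMask d (b + 1) < r + l) (hr' : r + l ≤ 2 ^ (b + 2)) :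
    MortonFaceConnected d L (Set.Icc (u * 2 ^ (b + 2) + r) (u * 2 ^ (b + 2) + r + l - 1)) := by
  have hpow : 2 ^ (b + 2) = 2 ^ (b + 1) + 2 ^ (b + 1) := by ring
  rcases le_or_gt (2 ^ (b + 1)) r with hr1 | hr1
  · have h2u : (2 * u + 1) * 2 ^ (b + 1) + (r - 2 ^ (b + 1)) = u * 2 ^ (b + 2) + r := by
      have : (2 * u + 1) * 2 ^ (b + 1) = u * 2 ^ (b + 2) + 2 ^ (b + 1) := by ring
      omega
    have := mortonFaceConnected_segment_of_le_two_pow (L := L) (b := b) hd (by omega) hl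
      (2 * u + 1) (α := r - 2 ^ (b + 1)) (by omega)
    rwa [h2u] at this
  · have := axisMask_add_offAxisMask d (b + 1)
    have := offAxisMask_lt d (b + 1)
    have hu : u * 2 ^ (b + 2) = u * 2 ^ (b + 1 + 1) := rfl
    exact mortonFaceConnected_of_crossing (b := b + 1) hd hb u (v := offAxisMask d (b + 1))
      (fun p hp => digit_offAxisMask_of_mod_eq hp) (offAxisMask_lt d (b + 1)) (by omega)
      (by omega) (by omega) (by omega)

lemma mortonFaceNbr_succ_of_dim_one {L Q : ℕ} (hQ : Q + 1 < 2 ^ L) :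
    MortonFaceNbr 1 L Q (Q + 1) := by
  have hcoord : ∀ x < 2 ^ L, mortonCoord 1 L 1 x = x := fun x hx => by
    simpa [mortonCoord_eq_ofBits] using ofBits_digit_of_lt hx
  refine ⟨by omega, 1, le_rfl, le_rfl, ?_, fun s h1 h2 h3 => by omega⟩
  rw [hcoord Q (by omega), hcoord (Q + 1) hQ]
  omega

lemma mortonFaceConnected_Icc_of_dim_one {L : ℕ} (x : ℕ) :
    ∀ k, x + k < 2 ^ L → MortonFaceConnected 1 L (Set.Icc x (x + k))
  | 0, _ => mortonFaceConnected_Icc_self 1 L x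
  | k + 1, h => MortonFaceConnected.Icc_union (z := x + k + 1)
      (mortonFaceConnected_Icc_of_dim_one x k (by omega)) (mortonFaceConnected_Icc_self _ _ _)
      (Nat.le_add_right x k) (by omega) le_rfl le_rfl (mortonFaceNbr_succ_of_dim_one h)

def continuousStarts (d L l : ℕ) : Set ℕ :=
  {a | a + l ≤ 2 ^ (d * L) ∧ MortonFaceConnected d L (Set.Icc a (a + l - 1))}

lemma continuousStarts_finite (d L l : ℕ) : (continuousStarts d L l).Finite :=
  (Set.finite_Iic (2 ^ (d * L))).subset fun a ha => by
    simp only [Set.mem_Iic]; exact le_of_add_le_left ha.1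

lemma mul_card_le_ncard {G : Set ℕ} (hG : G.Finite) {K M : ℕ} {T : Finset ℕ}
    (hT : ∀ r ∈ T, r < M) (hKT : ∀ u < K, ∀ r ∈ T, u * M + r ∈ G) : K * #T ≤ G.ncard := by
  have hinj : Set.InjOn (fun p : ℕ × ℕ => p.1 * M + p.2) ↑(range K ×ˢ T) := by
    rintro ⟨u, r⟩ hp ⟨u', r'⟩ hp' h
    simp only [coe_product, coe_range, Set.mem_prod, Set.mem_Iio, mem_coe] at hp hp' h
    have hr := hT r hp.2
    have hr' := hT r' hp'.2
    have hu : u = u' := by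
      simpa [Nat.add_mul_div_right, Nat.div_eq_of_lt hr, Nat.div_eq_of_lt hr', hr.pos,
        add_comm] using congrArg (· / M) h
    subst hu
    simp_all
  rw [← card_range K, ← card_product, ← card_image_of_injOn hinj, ← Set.ncard_coe_finset]
  refine Set.ncard_le_ncard (fun a ha => ?_) hG
  simp only [coe_image, coe_product, coe_range, Set.mem_image, Set.mem_prod, Set.mem_Iio,
    mem_coe, Prod.exists] at ha
  obtain ⟨u, r, ⟨hu, hr⟩, rfl⟩ := ha
  exact hKT u hu r hr

lemma sub_add_one_le_ncard_continuousStarts {d L l : ℕ} (hl : l ≤ 2 ^ (d * L))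
    (h : ∀ a, a + l ≤ 2 ^ (d * L) → MortonFaceConnected d L (Set.Icc a (a + l - 1))) :
    2 ^ (d * L) - l + 1 ≤ (continuousStarts d L l).ncard := by
  simpa using mul_card_le_ncard (continuousStarts_finite d L l) (K := 1)
    (T := range (2 ^ (d * L) - l + 1)) (fun r hr => mem_range.mp hr) fun u hu r hr => by
      obtain rfl : u = 0 := by omega
      have := mem_range.mp hr
      exact ⟨by omega, by simpa using h r (by omega)⟩

/-- In each aligned block of `2 ^ (b + 2)` quadrants, the segments starting at the offsets
`r ≤ axisMask d (b + 1)` and at their mirror images `2 ^ (b + 2) - l - r` are continuous. -/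
lemma two_pow_le_mul_ncard_continuousStarts {d L b l : ℕ} (hd : 2 ≤ d) (hb : b + 2 ≤ d * L)
    (hl : 2 ^ b < l) (hl' : l ≤ 2 ^ (b + 1)) :
    2 ^ (d * L) ≤ (2 ^ d - 1) * (continuousStarts d L l).ncard := by
  set O := axisMask d (b + 1)
  set c := 2 ^ (b + 2) - l - O
  have hpow : 2 ^ (b + 2) = 2 ^ (b + 1) + 2 ^ (b + 1) := by ring
  have hOC := axisMask_add_offAxisMask d (b + 1)
  have hO := two_mul_axisMask_lt hd (b + 1)
  have hdisj : Disjoint (range (O + 1)) (Ico c (c + (O + 1))) :=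
    disjoint_left.mpr fun r h1 h2 => by simp only [mem_range, mem_Ico] at h1 h2; omega
  have hcount := mul_card_le_ncard (continuousStarts_finite d L l) (K := 2 ^ (d * L - (b + 2)))
    (M := 2 ^ (b + 2)) (T := range (O + 1) ∪ Ico c (c + (O + 1)))
    (fun r hr => by simp only [mem_union, mem_range, mem_Ico] at hr; omega) fun u hu r hr => by
      have hfit : (u + 1) * 2 ^ (b + 2) ≤ 2 ^ (d * L) := by
        rw [← Nat.pow_sub_mul_pow 2 hb]; exact Nat.mul_le_mul_right _ hu
      rw [add_mul, one_mul] at hfit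
      simp only [mem_union, mem_range, mem_Ico] at hr
      rcases hr with hr | hr
      · exact ⟨by omega, mortonFaceConnected_segment_of_le_axisMask (by omega) (by omega) hl hl' u
          (by omega)⟩
      · exact ⟨by omega, mortonFaceConnected_segment_of_offAxisMask_lt (by omega) (by omega) hl u
          (by omega) (by omega)⟩
  rw [card_union_of_disjoint hdisj, card_range, Nat.card_Ico] at hcount
  calc 2 ^ (d * L) = 2 ^ (d * L - (b + 2)) * 2 * 2 ^ (b + 1) := by
        rw [mul_assoc, ← pow_succ', ← pow_add]; congr 1; omega
    _ ≤ 2 ^ (d * L - (b + 2)) * 2 * ((2 ^ d - 1) * (O + 1)) :=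
        Nat.mul_le_mul_left _ (two_pow_le_mul_axisMask_add_one (by omega) _)
    _ = (2 ^ d - 1) * (2 ^ (d * L - (b + 2)) * (O + 1 + (c + (O + 1) - c))) := by
        rw [Nat.add_sub_cancel_left]; ring
    _ ≤ (2 ^ d - 1) * (continuousStarts d L l).ncard := Nat.mul_le_mul_left _ hcount

lemma div_le_of_sub_add_one_le_mul {n l m c : ℕ} (hl : l ≤ n) (hm : 1 < m)
    (h : n - l + 1 ≤ (m - 1) * c) : ((n : ℚ) - l + 1) / (m - 1) ≤ c := by
  rw [div_le_iff₀ (by rw [sub_pos]; exact_mod_cast hm)]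
  have : ((n - l + 1 : ℕ) : ℚ) ≤ ((m - 1) * c : ℕ) := by exact_mod_cast h
  push_cast [hl, hm.le] at this
  linarith

end Morton

open Morton in
/-- The number of face-connected (continuous) segments of length `l` of the level-`L`
`d`-dimensional Morton curve is at least `(2^{dL} - l + 1) / (2^d - 1)`,
i.e. at least the fraction `1/(2^d - 1)` of all `2^{dL} - l + 1` segments of length `l`. -/
theorem morton_fraction_continuous_segments (d L l : ℕ) (hd : 1 ≤ d)
    (hl1 : 1 ≤ l) (hl2 : l ≤ 2 ^ (d * L)) :
    ((2 : ℚ) ^ (d * L) - l + 1) / ((2 : ℚ) ^ d - 1) ≤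
      ({a : ℕ | a + l ≤ 2 ^ (d * L) ∧
        MortonFaceConnected d L (Set.Icc a (a + l - 1))}.ncard : ℚ) := by
  suffices h : 2 ^ (d * L) - l + 1 ≤ (2 ^ d - 1) * (continuousStarts d L l).ncard by
    exact_mod_cast div_le_of_sub_add_one_le_mul hl2 (Nat.one_lt_two_pow (by omega)) h
  by_cases hall : ∀ a, a + l ≤ 2 ^ (d * L) → MortonFaceConnected d L (Set.Icc a (a + l - 1))
  · exact (sub_add_one_le_ncard_continuousStarts hl2 hall).trans
      (Nat.le_mul_of_pos_left _ (Nat.sub_pos_of_lt (Nat.one_lt_two_pow (by omega))))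
  have hd2 : 2 ≤ d := by
    refine (Nat.two_le_iff d).mpr ⟨by omega, fun hd1 => hall fun a ha => ?_⟩
    subst hd1
    rw [show a + l - 1 = a + (l - 1) by omega]
    exact mortonFaceConnected_Icc_of_dim_one a _ (by simp at ha; omega)
  have hl : 2 ≤ l := by
    refine (Nat.two_le_iff l).mpr ⟨by omega, fun hl => hall fun a _ => ?_⟩
    simpa [hl] using mortonFaceConnected_Icc_self d L a
  obtain ⟨b, hbl, hlb⟩ : ∃ b, 2 ^ b < l ∧ l ≤ 2 ^ (b + 1) :=
    ⟨Nat.log 2 (l - 1), by have := Nat.pow_log_le_self 2 (show l - 1 ≠ 0 by omega); omega,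
      by have := Nat.lt_pow_succ_log_self one_lt_two (l - 1); omega⟩
  have hb : b + 2 ≤ d * L := by
    have : b < d * L := (Nat.pow_lt_pow_iff_right (by norm_num)).mp (hbl.trans_le hl2)
    by_contra! htop
    refine hall fun a ha => ?_
    rw [show d * L = b + 1 by omega] at ha
    simpa using mortonFaceConnected_segment_of_le_two_pow (by omega) this hbl 0 ha
  exact (show 2 ^ (d * L) - l + 1 ≤ 2 ^ (d * L) by omega).trans
    (two_pow_le_mul_ncard_continuousStarts hd2 hb hbl hlb)
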